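/- arXiv:1908.01076 — 4 statements merged into one kernel-verified Lean document; each statement's English description precedes it below -/
import Mathlib

section
/- Let α, β, γ be non-zero complex numbers and m, n integers with m ≠ n and m, n ≠ 0. Consider the six expressions x₁ = α^m β^n, x₂ = α^n β^m, x₃ = α^m γ^n, x₄ = α^n γ^m, x₅ = β^m γ^n, x₆ = β^n γ^m (viewed as a list indexed by {1,…,6}, allowing accidental equalities of values). Assume the index set {1,…,6} admits a partition into three two-element sets such that for each pair, the quotient of the two corresponding expressions is a root of unity. Then one of α/β, α/γ, β/γ is a root of unity. -/
open Polynomial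
open scoped Classical

/-!
Split the six indices into `{0, 3, 4}` and `{1, 2, 5}`. For `i` in the first block and `j` in
the second, `x i / x j` is a nonzero integer power of `α / β`, `α / γ` or `β / γ`. A partition of
six indices into pairs cannot pair up the three indices of `{0, 3, 4}` among themselves, so some
pair crosses between the blocks, and its quotient makes the corresponding ratio a root of unity.
-/

def IsRootOfUnity (z : ℂ) : Prop := ∃ N : ℕ, 0 < N ∧ z ^ N = 1

lemma IsRootOfUnity.of_zpow {z : ℂ} {k : ℤ} (hk : k ≠ 0) (h : IsRootOfUnity (z ^ k)) :
    IsRootOfUnity z := by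
  obtain ⟨N, hN, hzN⟩ := h
  have hkN : z ^ (k * N) = 1 := by rwa [zpow_mul, zpow_natCast]
  refine ⟨(k * N).natAbs, Int.natAbs_pos.2 (mul_ne_zero hk (by omega)), ?_⟩
  rw [← zpow_natCast]
  rcases Int.natAbs_eq (k * N) with he | he
  · rw [← he, hkN]
  · rw [← neg_neg ((k * N).natAbs : ℤ), ← he, zpow_neg, hkN, inv_one]

namespace Finset

variable {ι : Type*} [DecidableEq ι]

lemma even_card_inter_of_not_split {V S : Finset ι} (hV : Even #V)
    (h : ∀ i ∈ V, ∀ j ∈ V, i ∈ S → j ∈ S) : Even #(V ∩ S) := by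
  by_cases hVS : ∃ i ∈ V, i ∈ S
  · obtain ⟨i, hi, hiS⟩ := hVS
    rwa [inter_eq_left.2 fun j hj => h i hi j hj hiS]
  · push Not at hVS
    rw [disjoint_iff_inter_eq_empty.1 (disjoint_left.2 hVS), card_empty]
    exact .zero

lemma exists_split_of_odd_card {V₁ V₂ V₃ S : Finset ι}
    (h₁ : Even #V₁) (h₂ : Even #V₂) (h₃ : Even #V₃)
    (h₁₂ : Disjoint V₁ V₂) (h₁₃ : Disjoint V₁ V₃) (h₂₃ : Disjoint V₂ V₃)
    (hS : S ⊆ V₁ ∪ V₂ ∪ V₃) (hodd : Odd #S) :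
    (∃ i ∈ V₁, ∃ j ∈ V₁, i ∈ S ∧ j ∉ S) ∨ (∃ i ∈ V₂, ∃ j ∈ V₂, i ∈ S ∧ j ∉ S) ∨
      (∃ i ∈ V₃, ∃ j ∈ V₃, i ∈ S ∧ j ∉ S) := by
  by_contra! h
  obtain ⟨n₁, n₂, n₃⟩ := h
  have hcard : #S = #(V₁ ∩ S) + #(V₂ ∩ S) + #(V₃ ∩ S) := by
    rw [← card_union_of_disjoint (h₁₂.mono inter_subset_left inter_subset_left),
      ← union_inter_distrib_right, ← card_union_of_disjoint ((disjoint_union_left.2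
        ⟨h₁₃, h₂₃⟩).mono inter_subset_left inter_subset_left),
      ← union_inter_distrib_right, inter_eq_right.2 hS]
  rw [← Nat.not_even_iff_odd, hcard] at hodd
  exact hodd (((even_card_inter_of_not_split h₁ n₁).add
    (even_card_inter_of_not_split h₂ n₂)).add (even_card_inter_of_not_split h₃ n₃))

end Finset

noncomputable def sixMonomials (α β γ : ℂ) (m n : ℤ) : Fin 6 → ℂ :=
  ![α ^ m * β ^ n, α ^ n * β ^ m, α ^ m * γ ^ n, α ^ n * γ ^ m, β ^ m * γ ^ n, β ^ n * γ ^ m]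

section SixMonomials

variable {α β γ : ℂ} {m n : ℤ}

local notation "x" => sixMonomials α β γ m n

lemma sixMonomials_div_sixMonomials (hα : α ≠ 0) (hβ : β ≠ 0) (hγ : γ ≠ 0) :
    x 0 / x 1 = (α / β) ^ (m - n) ∧ x 0 / x 2 = (β / γ) ^ n ∧ x 0 / x 5 = (α / γ) ^ m ∧
    x 3 / x 1 = (β / γ) ^ (-m) ∧ x 3 / x 2 = (α / γ) ^ (n - m) ∧ x 3 / x 5 = (α / β) ^ n ∧
    x 4 / x 1 = (α / γ) ^ (-n) ∧ x 4 / x 2 = (α / β) ^ (-m) ∧ x 4 / x 5 = (β / γ) ^ (m - n) := by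
  refine ⟨?_, ?_, ?_, ?_, ?_, ?_, ?_, ?_, ?_⟩ <;>
  · simp only [sixMonomials, Matrix.cons_val, Matrix.cons_val_zero, Matrix.cons_val_one, div_zpow,
      zpow_neg, zpow_sub₀ hα, zpow_sub₀ hβ, zpow_sub₀ hγ]
    field_simp

lemma IsRootOfUnity.of_sixMonomials_div (hα : α ≠ 0) (hβ : β ≠ 0) (hγ : γ ≠ 0)
    (hmn : m ≠ n) (hm : m ≠ 0) (hn : n ≠ 0) {i j : Fin 6}
    (hi : i ∈ ({0, 3, 4} : Finset (Fin 6))) (hj : j ∉ ({0, 3, 4} : Finset (Fin 6)))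
    (h : IsRootOfUnity (x i / x j)) :
    IsRootOfUnity (α / β) ∨ IsRootOfUnity (α / γ) ∨ IsRootOfUnity (β / γ) := by
  obtain ⟨e01, e02, e05, e31, e32, e35, e41, e42, e45⟩ := sixMonomials_div_sixMonomials
    (m := m) (n := n) hα hβ hγ
  simp only [Finset.mem_insert, Finset.mem_singleton] at hi hj
  obtain rfl | rfl | rfl : j = 1 ∨ j = 2 ∨ j = 5 := by omega
  all_goals rcases hi with rfl | rfl | rfl
  · exact .inl ((e01 ▸ h).of_zpow (sub_ne_zero.2 hmn))
  · exact .inr (.inr ((e31 ▸ h).of_zpow (neg_ne_zero.2 hm)))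
  · exact .inr (.inl ((e41 ▸ h).of_zpow (neg_ne_zero.2 hn)))
  · exact .inr (.inr ((e02 ▸ h).of_zpow hn))
  · exact .inr (.inl ((e32 ▸ h).of_zpow (sub_ne_zero.2 hmn.symm)))
  · exact .inl ((e42 ▸ h).of_zpow (neg_ne_zero.2 hm))
  · exact .inr (.inl ((e05 ▸ h).of_zpow hm))
  · exact .inl ((e35 ▸ h).of_zpow hn)
  · exact .inr (.inr ((e45 ▸ h).of_zpow (sub_ne_zero.2 hmn)))

end SixMonomials

/-- If the six monomial expressions in `α, β, γ` admit a partition of their indices into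
three pairs such that in each pair the quotient of the two expressions is a root of unity,
then one of `α/β`, `α/γ`, `β/γ` is a root of unity. -/
theorem rootOfUnity_of_partition_three_pairs (α β γ : ℂ) (m n : ℤ)
    (hα : α ≠ 0) (hβ : β ≠ 0) (hγ : γ ≠ 0)
    (hmn : m ≠ n) (hm : m ≠ 0) (hn : n ≠ 0)
    (x : Fin 6 → ℂ)
    (hx : x = ![α ^ m * β ^ n, α ^ n * β ^ m, α ^ m * γ ^ n, α ^ n * γ ^ m,
      β ^ m * γ ^ n, β ^ n * γ ^ m])
    (hpart : ∃ V₁ V₂ V₃ : Finset (Fin 6),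
      V₁.card = 2 ∧ V₂.card = 2 ∧ V₃.card = 2 ∧
      Disjoint V₁ V₂ ∧ Disjoint V₁ V₃ ∧ Disjoint V₂ V₃ ∧
      V₁ ∪ V₂ ∪ V₃ = Finset.univ ∧
      (∀ i ∈ V₁, ∀ j ∈ V₁, i ≠ j → IsRootOfUnity (x i / x j)) ∧
      (∀ i ∈ V₂, ∀ j ∈ V₂, i ≠ j → IsRootOfUnity (x i / x j)) ∧
      (∀ i ∈ V₃, ∀ j ∈ V₃, i ≠ j → IsRootOfUnity (x i / x j))) :
    IsRootOfUnity (α / β) ∨ IsRootOfUnity (α / γ) ∨ IsRootOfUnity (β / γ) := by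
  obtain ⟨V₁, V₂, V₃, hc₁, hc₂, hc₃, h₁₂, h₁₃, h₂₃, hcover, H₁, H₂, H₃⟩ := hpart
  have cross := @IsRootOfUnity.of_sixMonomials_div α β γ m n hα hβ hγ hmn hm hn
  rw [← sixMonomials] at hx
  subst hx
  rcases Finset.exists_split_of_odd_card (S := {0, 3, 4}) (hc₁ ▸ even_two) (hc₂ ▸ even_two)
    (hc₃ ▸ even_two) h₁₂ h₁₃ h₂₃ (hcover ▸ Finset.subset_univ _) (by decide) with
    ⟨i, hi, j, hj, hiS, hjS⟩ | ⟨i, hi, j, hj, hiS, hjS⟩ | ⟨i, hi, j, hj, hiS, hjS⟩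
  · exact cross hiS hjS (H₁ i hi j hj (ne_of_mem_of_not_mem hiS hjS))
  · exact cross hiS hjS (H₂ i hi j hj (ne_of_mem_of_not_mem hiS hjS))
  · exact cross hiS hjS (H₃ i hi j hj (ne_of_mem_of_not_mem hiS hjS))
end

section
/- Let α, β, γ be non-zero complex numbers that are all roots of a single trinomial X^m + A·X^n + B (m > n > 0, B ≠ 0, A, B complex). If |α| = |β| = |γ|, then one of the quotients α/β, α/γ, β/γ is a root of unity. -/
open Polynomial
open scoped Classical

open ComplexConjugate in
private lemma re_normSq_eq (p q : ℂ) (hre : p.re = q.re)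
    (hn : Complex.normSq p = Complex.normSq q) :
    p = q ∨ p = conj q := by
  have him : p.im = q.im ∨ p.im = -q.im := by
    simp only [Complex.normSq_apply] at hn
    rw [hre] at hn
    have h2 : p.im ^ 2 = q.im ^ 2 := by rw [sq, sq]; linarith
    exact sq_eq_sq_iff_eq_or_eq_neg.mp h2
  rcases him with h | h
  · exact Or.inl (Complex.ext hre h)
  · exact Or.inr (Complex.ext (by simpa using hre) (by simpa using h))

open ComplexConjugate in
private lemma circle_key (B x y : ℂ) (hB : B ≠ 0)
    (h : Complex.normSq x = Complex.normSq y)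
    (k : Complex.normSq (x + B) = Complex.normSq (y + B))
    (hxy : x ≠ y) :
    B * conj y = x * conj B := by
  have hC : x * conj x = y * conj y := by
    rw [Complex.mul_conj, Complex.mul_conj]; exact_mod_cast h
  have hK : (x + B) * (conj x + conj B) = (y + B) * (conj y + conj B) := by
    rw [← map_add, ← map_add, Complex.mul_conj, Complex.mul_conj]; exact_mod_cast k
  have hsum : conj B * x + conj (conj B * x) = B * conj y + conj (B * conj y) := by
    simp only [map_mul, Complex.conj_conj]
    linear_combination hK - hC
  have hre : (conj B * x).re = (B * conj y).re := by
    rw [Complex.add_conj, Complex.add_conj] at hsum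
    have h3 : (2:ℝ) * (conj B * x).re = 2 * (B * conj y).re := by exact_mod_cast hsum
    linarith
  have hns : Complex.normSq (conj B * x) = Complex.normSq (B * conj y) := by
    simp only [map_mul, Complex.normSq_conj]
    rw [h]
  rcases re_normSq_eq _ _ hre hns with heq | heq
  · rw [mul_comm x]; exact heq.symm
  · exfalso
    apply hxy
    simp only [map_mul, Complex.conj_conj] at heq
    exact mul_left_cancel₀ (by simp [hB]) heq

/-- If three non-zero complex numbers of the same absolute value are roots of a single
trinomial, then one of their pairwise quotients is a root of unity. -/
theorem rootOfUnity_of_three_roots_same_abs (α β γ A B : ℂ) (m n : ℕ)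
    (hα : α ≠ 0) (hβ : β ≠ 0) (hγ : γ ≠ 0)
    (hmn : n < m) (hn : 0 < n) (hB : B ≠ 0)
    (hra : α ^ m + A * α ^ n + B = 0) (hrb : β ^ m + A * β ^ n + B = 0)
    (hrc : γ ^ m + A * γ ^ n + B = 0)
    (hab : ‖α‖ = ‖β‖) (hbc : ‖β‖ = ‖γ‖) :
    IsRootOfUnity (α / β) ∨ IsRootOfUnity (α / γ) ∨ IsRootOfUnity (β / γ) := by
  have hm : 0 < m := hn.trans hmn
  have hnsab : Complex.normSq α = Complex.normSq β := by
    rw [← Complex.sq_norm, ← Complex.sq_norm, hab]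
  have hnsbc : Complex.normSq β = Complex.normSq γ := by
    rw [← Complex.sq_norm, ← Complex.sq_norm, hbc]
  -- the m-th powers lie on the same circle around 0
  have h1 : Complex.normSq (α ^ m) = Complex.normSq (β ^ m) := by
    rw [map_pow, map_pow, hnsab]
  have h2 : Complex.normSq (β ^ m) = Complex.normSq (γ ^ m) := by
    rw [map_pow, map_pow, hnsbc]
  -- and on the same circle around -B
  have shift : ∀ x : ℂ, x ^ m + A * x ^ n + B = 0 →
      Complex.normSq (x ^ m + B) = Complex.normSq A * Complex.normSq x ^ n := by
    intro x hx
    have : x ^ m + B = -(A * x ^ n) := by linear_combination hx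
    rw [this, Complex.normSq_neg, map_mul, map_pow]
  have k1 : Complex.normSq (α ^ m + B) = Complex.normSq (β ^ m + B) := by
    rw [shift α hra, shift β hrb, hnsab]
  have k2 : Complex.normSq (β ^ m + B) = Complex.normSq (γ ^ m + B) := by
    rw [shift β hrb, shift γ hrc, hnsbc]
  -- a root-of-unity constructor
  have rou : ∀ x y : ℂ, y ≠ 0 → x ^ m = y ^ m → IsRootOfUnity (x / y) := by
    intro x y hy hxy
    exact ⟨m, hm, by rw [div_pow, hxy, div_self (pow_ne_zero m hy)]⟩
  -- two circles with distinct centers meet in at most two points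
  by_cases e12 : α ^ m = β ^ m
  · exact Or.inl (rou α β hβ e12)
  by_cases e13 : α ^ m = γ ^ m
  · exact Or.inr (Or.inl (rou α γ hγ e13))
  have c1 := circle_key B (α ^ m) (β ^ m) hB h1 k1 e12
  have c2 := circle_key B (α ^ m) (γ ^ m) hB (h1.trans h2) (k1.trans k2) e13
  have : B * (starRingEnd ℂ) (β ^ m) = B * (starRingEnd ℂ) (γ ^ m) := by
    rw [c1, c2]
  have e23 : β ^ m = γ ^ m := by
    have := mul_left_cancel₀ hB this
    exact (starRingEnd ℂ).injective this
  exact Or.inr (Or.inr (rou β γ hγ e23))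
end

section
/- Let α, β, γ be non-zero complex numbers with |α| = |β| = |γ| that are all roots of a single trinomial X^m + A·X^n + B (m > n > 0, B ≠ 0, A, B complex). Then two of the three numbers α^m, β^m, γ^m are equal, i.e., α^m = β^m or α^m = γ^m or β^m = γ^m. -/
open Polynomial
open scoped Classical


/-- If three non-zero complex numbers of the same absolute value are roots of a single
trinomial `X^m + A X^n + B`, then two of their `m`-th powers coincide. -/
theorem mth_powers_coincide_of_three_roots_same_abs (α β γ A B : ℂ) (m n : ℕ)
    (hα : α ≠ 0) (hβ : β ≠ 0) (hγ : γ ≠ 0)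
    (hab : ‖α‖ = ‖β‖) (hbc : ‖β‖ = ‖γ‖)
    (hmn : n < m) (hn : 0 < n) (hB : B ≠ 0)
    (hra : α ^ m + A * α ^ n + B = 0) (hrb : β ^ m + A * β ^ n + B = 0)
    (hrc : γ ^ m + A * γ ^ n + B = 0) :
    α ^ m = β ^ m ∨ α ^ m = γ ^ m ∨ β ^ m = γ ^ m := by
  set s := ‖α‖ with hs
  set C : ℂ := (((‖A‖ * s ^ n) ^ 2 - (s ^ m) ^ 2 - (‖B‖) ^ 2 : ℝ) : ℂ)
    with hC
  have key : ∀ x : ℂ, ‖x‖ = s → x ^ m + A * x ^ n + B = 0 →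
      (starRingEnd ℂ) B * (x ^ m) ^ 2 - C * x ^ m + (((s ^ m) ^ 2 : ℝ) : ℂ) * B = 0 := by
    intro x hxs hx
    set z := x ^ m with hz
    have h1 : z * (starRingEnd ℂ) z = (((s ^ m) ^ 2 : ℝ) : ℂ) := by
      rw [Complex.mul_conj]
      norm_cast
      rw [← Complex.sq_norm, hz, norm_pow, hxs]
    have hzb : z + B = -(A * x ^ n) := by linear_combination hx
    have habs2 : ‖z + B‖ = ‖A‖ * s ^ n := by
      rw [hzb, norm_neg, norm_mul, norm_pow, hxs]
    have h2 : (z + B) * ((starRingEnd ℂ) z + (starRingEnd ℂ) B)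
        = (((‖A‖ * s ^ n) ^ 2 : ℝ) : ℂ) := by
      rw [← map_add, Complex.mul_conj]
      norm_cast
      rw [← Complex.sq_norm, habs2]
    have h3 : B * (starRingEnd ℂ) B = (((‖B‖) ^ 2 : ℝ) : ℂ) := by
      rw [Complex.mul_conj]
      norm_cast
      rw [← Complex.sq_norm]
    rw [hC]
    push_cast at h1 h2 h3 ⊢
    linear_combination z * h2 - (z + B) * h1 - z * h3
  have qa := key α rfl hra
  have qb := key β hab.symm hrb
  have qc := key γ (hab.trans hbc).symm hrc
  by_contra h
  push_neg at h
  obtain ⟨h12, h13, h23⟩ := h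
  have hBc : (starRingEnd ℂ) B ≠ 0 := by
    simpa using hB
  have e12 : (starRingEnd ℂ) B * (α ^ m + β ^ m) - C = 0 := by
    have hfac : (α ^ m - β ^ m) * ((starRingEnd ℂ) B * (α ^ m + β ^ m) - C) = 0 := by
      linear_combination qa - qb
    rcases mul_eq_zero.mp hfac with h' | h'
    · exact absurd (sub_eq_zero.mp h') h12
    · exact h'
  have e13 : (starRingEnd ℂ) B * (α ^ m + γ ^ m) - C = 0 := by
    have hfac : (α ^ m - γ ^ m) * ((starRingEnd ℂ) B * (α ^ m + γ ^ m) - C) = 0 := by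
      linear_combination qa - qc
    rcases mul_eq_zero.mp hfac with h' | h'
    · exact absurd (sub_eq_zero.mp h') h13
    · exact h'
  have : (starRingEnd ℂ) B * (β ^ m - γ ^ m) = 0 := by linear_combination e12 - e13
  rcases mul_eq_zero.mp this with h' | h'
  · exact hBc h'
  · exact h23 (sub_eq_zero.mp h')
end

section
/- Let Ω be a finite set of non-zero complex numbers that splits into at most 2 equivalence classes under the relation α ∼ β iff α/β is a root of unity. Then there are infinitely many trinomials X^m + A·X^n + B (m > n > 0, B ≠ 0) that vanish at every element of Ω. -/
/-!
Choose representatives `α`, `β` of the (at most two) classes. Every `ω ∈ Ω` differs from one of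
them by a root of unity, so for a common exponent `N` each `ω ^ N` equals `α ^ N` or `β ^ N`.
Hence for every `d` divisible by `N` the polynomial `(X ^ d - α ^ d) (X ^ d - β ^ d)`, which is
the trinomial `X ^ (2d) - (α ^ d + β ^ d) X ^ d + α ^ d β ^ d`, vanishes on `Ω`; these are
pairwise distinct, having distinct degrees.
-/

open Polynomial
open scoped Classical

theorem IsRootOfUnity.div_comm {a b : ℂ} (h : IsRootOfUnity (a / b)) : IsRootOfUnity (b / a) := by
  obtain ⟨n, hn, h⟩ := h
  exact ⟨n, hn, by rw [← inv_div, inv_pow, h, inv_one]⟩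

theorem IsRootOfUnity.exists_pow_eq_pow {ω α : ℂ} (hα : α ≠ 0) (h : IsRootOfUnity (ω / α)) :
    ∃ n, 0 < n ∧ ω ^ n = α ^ n := by
  obtain ⟨n, hn, h⟩ := h
  exact ⟨n, hn, by rwa [div_pow, div_eq_one_iff_eq (pow_ne_zero _ hα)] at h⟩

theorem exists_two_representatives (Ω : Finset ℂ) (h0 : ∀ ω ∈ Ω, ω ≠ 0)
    (h2 : ∀ α ∈ Ω, ∀ β ∈ Ω, ∀ γ ∈ Ω,
      IsRootOfUnity (α / β) ∨ IsRootOfUnity (α / γ) ∨ IsRootOfUnity (β / γ)) :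
    ∃ α β : ℂ, α ≠ 0 ∧ β ≠ 0 ∧ ∀ ω ∈ Ω, IsRootOfUnity (ω / α) ∨ IsRootOfUnity (ω / β) := by
  rcases Ω.eq_empty_or_nonempty with rfl | ⟨α, hαΩ⟩
  · exact ⟨1, 1, one_ne_zero, one_ne_zero, by simp⟩
  by_cases hall : ∀ ω ∈ Ω, IsRootOfUnity (ω / α)
  · exact ⟨α, α, h0 α hαΩ, h0 α hαΩ, fun ω hω => .inl (hall ω hω)⟩
  push Not at hall
  obtain ⟨β, hβΩ, hβα⟩ := hall
  refine ⟨α, β, h0 α hαΩ, h0 β hβΩ, fun ω hω => ?_⟩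
  rcases h2 ω hω α hαΩ β hβΩ with h | h | h
  exacts [.inl h, .inr h, (hβα h.div_comm).elim]

theorem Finset.exists_pos_pow_eq_pow_or_pow_eq_pow {M : Type*} [Monoid M] (s : Finset M)
    (a b : M) (h : ∀ x ∈ s, ∃ n, 0 < n ∧ (x ^ n = a ^ n ∨ x ^ n = b ^ n)) :
    ∃ N, 0 < N ∧ ∀ x ∈ s, x ^ N = a ^ N ∨ x ^ N = b ^ N := by
  choose! n hn_pos hn using h
  refine ⟨∏ x ∈ s, n x, Finset.prod_pos hn_pos, fun x hx => ?_⟩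
  obtain ⟨c, hc⟩ := Finset.dvd_prod_of_mem n hx
  simp only [hc, pow_mul]
  exact (hn x hx).imp (fun h => by rw [h]) (fun h => by rw [h])

section Trinomial

variable {R : Type*} [CommRing R]

theorem X_pow_sub_C_mul_X_pow_sub_C (d : ℕ) (a b : R) :
    (X ^ d - C a) * (X ^ d - C b) = X ^ (d + d) + C (-(a + b)) * X ^ d + C (a * b) := by
  simp only [pow_add, map_neg, map_add, map_mul]
  ring

theorem natDegree_X_pow_sub_C_mul_X_pow_sub_C [Nontrivial R] {d : ℕ} (hd : d ≠ 0) (a b : R) :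
    ((X ^ d - C a) * (X ^ d - C b)).natDegree = d + d := by
  rw [(monic_X_pow_sub_C a hd).natDegree_mul (monic_X_pow_sub_C b hd), natDegree_X_pow_sub_C,
    natDegree_X_pow_sub_C]

theorem eval_X_pow_sub_C_mul_X_pow_sub_C_eq_zero {d : ℕ} {a b x : R}
    (h : x ^ d = a ∨ x ^ d = b) : ((X ^ d - C a) * (X ^ d - C b)).eval x = 0 := by
  rcases h with h | h <;> simp [h]

end Trinomial

/-- If a finite set `Ω` of non-zero complex numbers splits into at most 2 equivalence
classes (no three pairwise inequivalent elements), then infinitely many trinomials vanish at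
every element of `Ω`. -/
theorem infinitely_many_trinomials_of_le_two_classes (Ω : Finset ℂ)
    (h0 : ∀ ω ∈ Ω, ω ≠ 0)
    (h2 : ∀ α ∈ Ω, ∀ β ∈ Ω, ∀ γ ∈ Ω,
      IsRootOfUnity (α / β) ∨ IsRootOfUnity (α / γ) ∨ IsRootOfUnity (β / γ)) :
    ({p : Polynomial ℂ | ∃ m n : ℕ, ∃ A B : ℂ, n < m ∧ 0 < n ∧ B ≠ 0 ∧
          p = X ^ m + Polynomial.C A * X ^ n + Polynomial.C B ∧ ∀ ω ∈ Ω, p.eval ω = 0}).Infinite := by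
  obtain ⟨α, β, hα, hβ, hcov⟩ := exists_two_representatives Ω h0 h2
  obtain ⟨N, hN, hpow⟩ := Ω.exists_pos_pow_eq_pow_or_pow_eq_pow α β fun ω hω => by
    rcases hcov ω hω with h | h
    · obtain ⟨n, hn, h⟩ := h.exists_pow_eq_pow hα
      exact ⟨n, hn, .inl h⟩
    · obtain ⟨n, hn, h⟩ := h.exists_pow_eq_pow hβ
      exact ⟨n, hn, .inr h⟩
  have hd : ∀ k : ℕ, 0 < N * (k + 1) := fun k => by positivity
  apply Set.infinite_of_injective_forall_mem
    (f := fun k : ℕ => (X ^ (N * (k + 1)) - C (α ^ (N * (k + 1)))) *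
      (X ^ (N * (k + 1)) - C (β ^ (N * (k + 1)))))
  · intro k l hkl
    have hdeg := congrArg natDegree hkl
    simp only [natDegree_X_pow_sub_C_mul_X_pow_sub_C (hd _).ne'] at hdeg
    have := Nat.eq_of_mul_eq_mul_left hN (by omega : N * (k + 1) = N * (l + 1))
    omega
  · intro k
    refine ⟨_, _, _, _, Nat.lt_add_of_pos_left (hd k), hd k,
      mul_ne_zero (pow_ne_zero _ hα) (pow_ne_zero _ hβ), X_pow_sub_C_mul_X_pow_sub_C _ _ _,
      fun ω hω => eval_X_pow_sub_C_mul_X_pow_sub_C_eq_zero ?_⟩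
    simp only [pow_mul]
    exact (hpow ω hω).imp (fun h => by rw [h]) (fun h => by rw [h])
end
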